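/- The overall Ego Cluster loss rate, defined as the simple average of per-ego loss rates across all N_c + N_t egos, is minimized over all alter assignments... specifically: for each alter k, if w_T(k) ≥ w_C(k) assign k to T else to C; under the assumption that each alter's edges contribute monotonically to per-ego loss rates with fixed denominators, any deviation from the greedy assignment for some alter k with w_T(k) ≠ w_C(k) strictly increases the average loss rate. -/

import Mathlib

open Finset

/-!
Exchanging the sums over egos and alters, the total loss is `1/d` times a sum over alters of
`wC k` if `k` is assigned to treatment and `wT k` otherwise: the loss of each alter depends
only on its own assignment, so the greedy choice minimises every summand, strictly wherever
`wT k ≠ wC k`.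
-/

lemma sum_sum_ite_ne_eq_sum_sum_filter {K ι M : Type*} [Fintype K] [Fintype ι]
    [AddCommMonoid M] (grp : ι → Bool) (τ : K → Bool) (e : K → ι → M) :
    ∑ i, ∑ k, (if τ k ≠ grp i then e k i else 0) =
      ∑ k, ∑ i ∈ univ.filter (fun i => grp i = !τ k), e k i := by
  rw [sum_comm]
  refine sum_congr rfl fun k _ => ?_
  rw [sum_filter]
  refine sum_congr rfl fun i _ => ?_
  cases τ k <;> cases grp i <;> rfl

section Greedy

variable {α : Type*} [LinearOrder α] {t c : α} {g : Bool}

lemma cond_le_cond_of_iff_le (hg : g = true ↔ c ≤ t) (b : Bool) :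
    cond g c t ≤ cond b c t := by
  cases g <;> cases b <;> simp_all [le_of_lt]

lemma cond_lt_cond_of_iff_le (hg : g = true ↔ c ≤ t) {b : Bool} (hb : b ≠ g) (htc : t ≠ c) :
    cond g c t < cond b c t := by
  cases g <;> cases b <;> simp_all [lt_of_le_of_ne, Ne.symm]

end Greedy

theorem stmt9_general {K ι : Type*} [Fintype K] [Fintype ι] [Nonempty ι]
    (grp : ι → Bool)
    (e : K → ι → ℝ)
    (d : ℝ) (hd : 0 < d) (D : ι → ℝ) (hD : ∀ i, D i = d)
    (wT wC : K → ℝ)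
    (hwT : ∀ k, wT k = ∑ i ∈ Finset.univ.filter (fun i => grp i = true), e k i)
    (hwC : ∀ k, wC k = ∑ i ∈ Finset.univ.filter (fun i => grp i = false), e k i)
    (gr : K → Bool) (hgr : ∀ k, gr k = true ↔ wC k ≤ wT k)
    (avg : (K → Bool) → ℝ)
    (havg : ∀ σ, avg σ =
      (∑ i, (∑ k, if σ k ≠ grp i then e k i else 0) / D i) / (Fintype.card ι : ℝ))
    (σ : K → Bool) (hdev : ∃ k, σ k ≠ gr k ∧ wT k ≠ wC k) :
    avg gr < avg σ := by
  have havg_eq : ∀ τ : K → Bool,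
      avg τ = (∑ k, cond (τ k) (wC k) (wT k)) / d / Fintype.card ι := by
    intro τ
    simp only [havg, hD, ← sum_div, sum_sum_ite_ne_eq_sum_sum_filter]
    congr 3 with k
    cases τ k <;> simp [hwT, hwC]
  obtain ⟨k₀, hσk₀, hwk₀⟩ := hdev
  rw [havg_eq, havg_eq]
  have hcard : (0 : ℝ) < Fintype.card ι := Nat.cast_pos.mpr Fintype.card_pos
  refine div_lt_div_of_pos_right (div_lt_div_of_pos_right ?_ hd) hcard
  exact sum_lt_sum (fun k _ => cond_le_cond_of_iff_le (hgr k) (σ k))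
    ⟨k₀, mem_univ _, cond_lt_cond_of_iff_le (hgr k₀) hσk₀ hwk₀⟩

/-- Egos `ι` are partitioned into groups by `grp : ι → Bool`
(`true` = treatment), alters are `K`, with nonnegative edge weights `e k i`.
Each ego's total edge weight `D i` is fixed and all equal to `d > 0` (so the
greedy rule and the ego-weighted rule coincide). The per-ego loss rate of ego
`i` under assignment `σ` is `(∑ over alters k assigned to the other group of
e k i)/D i`, and the average loss rate is the simple average over all egos.
The greedy assignment `gr` sets `gr k = true` iff `wC k ≤ wT k`, where
`wT k, wC k` are k's total weights to treatment/control egos. Claim: any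
assignment `σ` deviating from the greedy one at some alter `k` with
`wT k ≠ wC k` has strictly larger average loss rate. -/
theorem stmt9 {K ι : Type*} [Fintype K] [Fintype ι] [Nonempty ι]
    (grp : ι → Bool)
    (e : K → ι → ℝ) (he : ∀ k i, 0 ≤ e k i)
    (d : ℝ) (hd : 0 < d) (D : ι → ℝ) (hD : ∀ i, D i = d)
    (wT wC : K → ℝ)
    (hwT : ∀ k, wT k = ∑ i ∈ Finset.univ.filter (fun i => grp i = true), e k i)
    (hwC : ∀ k, wC k = ∑ i ∈ Finset.univ.filter (fun i => grp i = false), e k i)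
    (gr : K → Bool) (hgr : ∀ k, gr k = true ↔ wC k ≤ wT k)
    (avg : (K → Bool) → ℝ)
    (havg : ∀ σ, avg σ =
      (∑ i, (∑ k, if σ k ≠ grp i then e k i else 0) / D i) / (Fintype.card ι : ℝ))
    (σ : K → Bool) (hdev : ∃ k, σ k ≠ gr k ∧ wT k ≠ wC k) :
    avg gr < avg σ :=
  stmt9_general grp e d hd D hD wT wC hwT hwC gr hgr avg havg σ hdev
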